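/- arXiv:1603.05230 — 5 statements merged into one kernel-verified Lean document; each statement's English description precedes it below -/
import Mathlib

section
/- (Artin–Tate application) Let R ⊆ C ⊆ A be rings with C central in A, A finitely generated as an R-algebra, A finitely generated as a C-module, and A noetherian. Then C is a finitely generated R-algebra. -/
/-!
Pick a finitely generated `R`-subalgebra `C₀ ⊆ C` containing the coefficients that express the
algebra generators of `A` and their pairwise products in terms of `C`-module generators of
`A`; then `A` is already a finite `C₀`-module. Since `C₀` is central, every `I • A` with `I` an
ideal of `C₀` is a left ideal of `A`, so the noetherian ring `A` has ACC on such submodules,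
and Formanek's argument shows that this forces `A` to be a noetherian `C₀`-module. Hence the
`C₀`-submodule `C` is finite over `C₀`, and `C` is of finite type over `R`.
-/

open Submodule
open scoped Pointwise

section

variable {R M : Type*} [CommRing R] [AddCommGroup M] [Module R M]

theorem smul_top_le_iff_mem_annihilator_quotient {r : R} {N : Submodule R M} :
    r • (⊤ : Submodule R M) ≤ N ↔ r ∈ Module.annihilator R (M ⧸ N) := by
  rw [Submodule.annihilator_quotient, ← mem_colon_iff_le, top_coe]

theorem annihilator_le_annihilator_quotient (P : Submodule R M) :
    Module.annihilator R M ≤ Module.annihilator R (M ⧸ P) :=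
  LinearMap.annihilator_le_of_surjective P.mkQ P.mkQ_surjective

theorem annihilator_quotient_sSup_le [Module.Finite R M] {c : Set (Submodule R M)}
    (hne : c.Nonempty) (hchain : IsChain (· ≤ ·) c)
    (hc : ∀ N ∈ c, Module.annihilator R (M ⧸ N) ≤ Module.annihilator R M) :
    Module.annihilator R (M ⧸ sSup c) ≤ Module.annihilator R M := by
  intro r hr
  have hcompact : IsCompactElement (r • (⊤ : Submodule R M)) :=
    (fg_iff_compact _).mp (Module.Finite.fg_top.map _)
  obtain ⟨N, hNc, hN⟩ := (CompleteLattice.isCompactElement_iff_le_of_directed_sSup_le _ _).mp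
    hcompact c hne hchain.directedOn (smul_top_le_iff_mem_annihilator_quotient.mpr hr)
  exact hc N hNc (smul_top_le_iff_mem_annihilator_quotient.mp hN)

theorem exists_maximal_annihilator_quotient_eq [Module.Finite R M] :
    ∃ N : Submodule R M, Module.annihilator R (M ⧸ N) = Module.annihilator R M ∧
      ∀ P, N < P → Module.annihilator R M < Module.annihilator R (M ⧸ P) := by
  have hbot : Module.annihilator R (M ⧸ (⊥ : Submodule R M)) ≤ Module.annihilator R M :=
    LinearMap.annihilator_le_of_injective _ (quotEquivOfEqBot ⊥ rfl).symm.injective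
  obtain ⟨N, -, hN⟩ := zorn_le_nonempty₀
    {N : Submodule R M | Module.annihilator R (M ⧸ N) ≤ Module.annihilator R M}
    (fun c hcS hchain N hN => ⟨sSup c, annihilator_quotient_sSup_le ⟨N, hN⟩ hchain hcS,
      fun _ => le_sSup⟩) ⊥ hbot
  refine ⟨N, hN.prop.antisymm (annihilator_le_annihilator_quotient N),
    fun P hNP => (annihilator_le_annihilator_quotient P).lt_of_ne fun h => ?_⟩
  exact hNP.not_ge (hN.2 h.ge hNP.le)

theorem isNoetherian_quotient_annihilator [Module.Finite R M] [IsNoetherian R M] :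
    IsNoetherian R (R ⧸ Module.annihilator R M) := by
  obtain ⟨n, x, hx⟩ := Module.Finite.exists_fin (R := R) (M := M)
  let f : R →ₗ[R] Fin n → M := LinearMap.pi fun i => LinearMap.toSpanSingleton R M (x i)
  have hker : LinearMap.ker f = Module.annihilator R M := by
    rw [LinearMap.ker_pi, ← annihilator_top, ← hx, annihilator_span]
    exact (iInf_range' (fun y => LinearMap.ker (LinearMap.toSpanSingleton R M y)) x).symm
  exact isNoetherian_of_linearEquiv (hker ▸ f.quotKerEquivRange).symm

theorem isNoetherian_of_isNoetherian_quotient_annihilator [Module.Finite R M]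
    [IsNoetherian R (R ⧸ Module.annihilator R M)] : IsNoetherian R M := by
  let := Module.quotientAnnihilator (R := R) (M := M)
  have : Module.Finite (R ⧸ Module.annihilator R M) M := .of_restrictScalars_finite R _ M
  obtain ⟨n, f, hf⟩ := Module.Finite.exists_fin' (R ⧸ Module.annihilator R M) M
  exact isNoetherian_of_surjective (f := f.restrictScalars R) (LinearMap.range_eq_top.mpr hf)

theorem isNoetherian_quotient_of_forall_lt_fg {N : Submodule R M} (h : ∀ P, N < P → P.FG) :
    IsNoetherian R (M ⧸ N) := by
  refine ⟨fun t => ?_⟩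
  rw [← map_comap_eq_of_surjective N.mkQ_surjective t]
  rcases (le_comap_mkQ N t).eq_or_lt with h_eq | h_lt
  · rw [← h_eq, mkQ_map_self]
    exact fg_bot
  · exact (h _ h_lt).map _

theorem fg_of_smul_top_le [Module.Finite R M] {r : R} {P : Submodule R M}
    [IsNoetherian R (M ⧸ r • (⊤ : Submodule R M))] (hP : r • ⊤ ≤ P) : P.FG := by
  refine fg_of_fg_map_of_fg_inf_ker (r • ⊤ : Submodule R M).mkQ (IsNoetherian.noetherian _) ?_
  rw [ker_mkQ, inf_eq_right.mpr hP]
  exact Module.Finite.fg_top.map _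

theorem isNoetherian_of_forall_isNoetherian_quotient_smul_top [Module.Finite R M]
    (h : ∀ r ∉ Module.annihilator R M, IsNoetherian R (M ⧸ r • (⊤ : Submodule R M))) :
    IsNoetherian R M := by
  obtain ⟨N, hN, hNmax⟩ := exists_maximal_annihilator_quotient_eq (R := R) (M := M)
  -- Each `P > N` contains some `r • M` with `r ∉ ann M`, and `M ⧸ r • M` is noetherian.
  have hfg : ∀ P, N < P → P.FG := fun P hNP => by
    obtain ⟨r, hrP, hr⟩ := SetLike.exists_of_lt (hNmax P hNP)
    have := h r hr
    exact fg_of_smul_top_le (smul_top_le_iff_mem_annihilator_quotient.mpr hrP)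
  have := isNoetherian_quotient_of_forall_lt_fg hfg
  -- `R ⧸ ann M = R ⧸ ann (M ⧸ N)` embeds into a power of the noetherian module `M ⧸ N`.
  have := isNoetherian_quotient_annihilator (R := R) (M := M ⧸ N)
  rw [hN] at this
  exact isNoetherian_of_isNoetherian_quotient_annihilator

theorem map_mkQ_sup_smul_top (p : Submodule R M) (r : R) :
    (p ⊔ r • ⊤).map p.mkQ = r • (⊤ : Submodule R (M ⧸ p)) := by
  rw [Submodule.map_sup, mkQ_map_self, bot_sup_eq, map_pointwise_smul, Submodule.map_top,
    range_mkQ]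

theorem isNoetherian_of_wellFounded_smul_top [Module.Finite R M]
    (h : WellFounded (InvImage (· > ·) fun I : Ideal R => I • (⊤ : Submodule R M))) :
    IsNoetherian R M := by
  by_contra hM
  have hbot : ¬ IsNoetherian R (M ⧸ (⊥ : Ideal R) • (⊤ : Submodule R M)) := fun _ =>
    hM <| isNoetherian_of_linearEquiv <|
      quotEquivOfEqBot ((⊥ : Ideal R) • ⊤) (Submodule.bot_smul ⊤)
  -- `I • M` is maximal among the `J • M` with non-noetherian quotient, so every quotient of
  -- `M ⧸ I • M` by a nonzero `r • (M ⧸ I • M)` is noetherian.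
  obtain ⟨I, hI, hImax⟩ :=
    h.has_min {I | ¬ IsNoetherian R (M ⧸ I • (⊤ : Submodule R M))} ⟨⊥, hbot⟩
  apply hI
  refine isNoetherian_of_forall_isNoetherian_quotient_smul_top fun r hr => ?_
  have hlt : I • ⊤ < (I ⊔ Ideal.span {r}) • (⊤ : Submodule R M) := by
    rw [sup_smul, ideal_span_singleton_smul]
    exact left_lt_sup.mpr (mt smul_top_le_iff_mem_annihilator_quotient.mp hr)
  have : IsNoetherian R (M ⧸ (I ⊔ Ideal.span {r}) • (⊤ : Submodule R M)) :=
    not_not.mp fun hJ => hImax _ hJ hlt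
  rw [sup_smul, ideal_span_singleton_smul] at this
  have e :=
    quotientQuotientEquivQuotient (I • ⊤ : Submodule R M) (I • ⊤ ⊔ r • ⊤) le_sup_left
  rw [map_mkQ_sup_smul_top] at e
  exact isNoetherian_of_linearEquiv e.symm

end

section

variable {C A : Type*} [CommSemiring C] [Semiring A] [Algebra C A]

theorem smul_top_eq_restrictScalars_map (I : Ideal C) :
    I • (⊤ : Submodule C A) = (I.map (algebraMap C A)).restrictScalars C := by
  have hmul : ∀ (a : A) {x : A}, x ∈ I • (⊤ : Submodule C A) →
      a * x ∈ I • (⊤ : Submodule C A) :=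
    fun a x hx => smul_induction_on hx
      (fun i hi b _ => mul_smul_comm i a b ▸ smul_mem_smul hi mem_top)
      (fun x y hx hy => (mul_add a x y).symm ▸ add_mem hx hy)
  refine le_antisymm (smul_le.mpr fun i hi a _ => ?_) fun x hx => ?_
  · rw [Algebra.smul_def, Algebra.commutes]
    exact Ideal.mul_mem_left _ a (Ideal.mem_map_of_mem _ hi)
  · induction hx using span_induction with
    | mem x hx =>
      obtain ⟨i, hi, rfl⟩ := hx
      rw [Algebra.algebraMap_eq_smul_one]
      exact smul_mem_smul hi mem_top
    | zero => exact zero_mem _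
    | add x y _ _ hx hy => exact add_mem hx hy
    | smul a x _ hx => exact hmul a hx

theorem wellFounded_smul_top [IsNoetherianRing A] :
    WellFounded (InvImage (· > ·) fun I : Ideal C => I • (⊤ : Submodule C A)) := by
  have : InvImage (· > ·) (fun I : Ideal C => I • (⊤ : Submodule C A)) =
      InvImage (· > ·) fun I : Ideal C => I.map (algebraMap C A) := by
    ext I J
    simp only [InvImage, smul_top_eq_restrictScalars_map]
    exact (restrictScalarsEmbedding C A A).lt_iff_lt
  exact this ▸ InvImage.wf _ wellFounded_gt

end

theorem isNoetherian_of_isNoetherianRing_of_moduleFinite {C A : Type*} [CommRing C] [Ring A]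
    [Algebra C A] [IsNoetherianRing A] [Module.Finite C A] : IsNoetherian C A :=
  isNoetherian_of_wellFounded_smul_top wellFounded_smul_top

theorem artin_tate_central_subalgebra_general
    (R C A : Type*) [CommRing R] [CommRing C] [Ring A]
    [Algebra R C] [Algebra C A] [Algebra R A] [IsScalarTower R C A]
    (hCA : Function.Injective (algebraMap C A))
    (hfgAlg : Algebra.FiniteType R A)
    (hfgMod : Module.Finite C A)
    (hNoeth : IsNoetherianRing A) :
    Algebra.FiniteType R C := by
  obtain ⟨C₀, hC₀, hC₀A⟩ := exists_subalgebra_of_fg R C A hfgAlg.out hfgMod.fg_top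
  have : Module.Finite C₀ A := ⟨hC₀A⟩
  have : IsNoetherian C₀ A := isNoetherian_of_isNoetherianRing_of_moduleFinite
  have : Module.Finite C₀ C := .of_injective (IsScalarTower.toAlgHom C₀ C A).toLinearMap hCA
  exact .trans ((Subalgebra.fg_iff_finiteType C₀).mp hC₀) (Module.Finite.finiteType C)

/-- **Artin–Tate lemma.** Let `R ⊆ C ⊆ A` be rings with `C` central in `A` (encoded by `A` being
a `C`-algebra with compatible scalar towers and injective structure maps), `A` a finitely
generated `R`-algebra, `A` a finitely generated `C`-module, and `A` noetherian.
Then `C` is a finitely generated `R`-algebra. -/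
theorem artin_tate_central_subalgebra
    (R C A : Type*) [CommRing R] [CommRing C] [Ring A]
    [Algebra R C] [Algebra C A] [Algebra R A] [IsScalarTower R C A]
    (hRC : Function.Injective (algebraMap R C))
    (hCA : Function.Injective (algebraMap C A))
    (hfgAlg : Algebra.FiniteType R A)
    (hfgMod : Module.Finite C A)
    (hNoeth : IsNoetherianRing A) :
    Algebra.FiniteType R C :=
  artin_tate_central_subalgebra_general R C A hCA hfgAlg hfgMod hNoeth
end

section
/- Let A be a ring with nonzero idempotent e such that the natural map A → End_{eAe}(Ae) (sending a to left multiplication by a) is an isomorphism (the double centralizer property). Then multiplication by e induces a ring isomorphism Z(A) → Z(eAe) between the centers (the Satake isomorphism). -/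
/-- The left ideal `Ae`, as a left `A`-submodule of `A`. -/
noncomputable def leftIdealGenBy {A : Type*} [Ring A] (e : A) : Submodule A A :=
  Submodule.span A {e}

lemma mul_corner_mem_leftIdealGenBy {A : Type*} [Ring A] (e x v : A) :
    v * (e * x * e) ∈ leftIdealGenBy e := by
  have h : v * (e * x * e) = (v * (e * x)) • e := by
    simp [smul_eq_mul, mul_assoc]
  rw [h]
  exact Submodule.smul_mem _ _ (Submodule.mem_span_singleton_self e)

/-- Right multiplication by the corner element `e*x*e` on the left ideal `Ae`. -/
noncomputable def cornerRightMul {A : Type*} [Ring A] (e x : A) :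
    leftIdealGenBy e →ₗ[A] leftIdealGenBy e where
  toFun v := ⟨(v : A) * (e * x * e), mul_corner_mem_leftIdealGenBy e x (v : A)⟩
  map_add' u v := by
    apply Subtype.ext
    simp [add_mul]
  map_smul' a v := by
    apply Subtype.ext
    simp [mul_assoc]

/-- **Satake isomorphism.** Let `A` be a ring with a nonzero idempotent `e` satisfying the
double centralizer property: the map `A → End_{eAe}(Ae)` sending `a` to left multiplication
by `a` is injective (`hinj`) and surjective (`hsurj`, where an `eAe`-module endomorphism of
`Ae` is an additive map commuting with right multiplication by corner elements `e*x*e`).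
Then multiplication by `e` induces a ring isomorphism `Z(A) → Z(eAe)`: the map `z ↦ e*z*e`
is a bijection from the center of `A` onto the center
`{x | e*x*e = x ∧ ∀ y, x·(eye) = (eye)·x}` of `eAe`, it is multiplicative on central
elements, and it sends `1` to the unit `e` of `eAe`. -/
theorem satake_isomorphism {A : Type*} [Ring A] (e : A) (he : e * e = e) (hne : e ≠ 0)
    (hinj : ∀ a : A, (∀ v : leftIdealGenBy e, a * (v : A) = 0) → a = 0)
    (hsurj : ∀ f : leftIdealGenBy e →+ leftIdealGenBy e,
      (∀ (x : A) (v : leftIdealGenBy e),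
        ((f (cornerRightMul e x v) : leftIdealGenBy e) : A)
          = ((f v : leftIdealGenBy e) : A) * (e * x * e)) →
      ∃ a : A, ∀ v : leftIdealGenBy e, ((f v : leftIdealGenBy e) : A) = a * (v : A)) :
    Set.BijOn (fun z : A => e * z * e) (Subring.center A : Set A)
      {x : A | e * x * e = x ∧ ∀ y : A, x * (e * y * e) = (e * y * e) * x} ∧
    (∀ z w : A, z ∈ Subring.center A → w ∈ Subring.center A →
      e * (z * w) * e = (e * z * e) * (e * w * e)) ∧
    e * (1 : A) * e = e := by
  have he1 : e ∈ leftIdealGenBy e := Submodule.mem_span_singleton_self e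
  have hee : ∀ x : A, e * (e * x) = e * x := by
    intro x; rw [← mul_assoc, he]
  have key : ∀ z : A, z ∈ Subring.center A → e * z * e = z * e := by
    intro z hz
    rw [Subring.mem_center_iff.mp hz e, mul_assoc, he]
  refine ⟨⟨?_, ?_, ?_⟩, ?_, ?_⟩
  · -- MapsTo
    intro z hz
    have hz' := Subring.mem_center_iff.mp hz
    have hswap : ∀ g x : A, g * (z * x) = z * (g * x) := by
      intro g x; rw [← mul_assoc, hz' g, mul_assoc]
    refine ⟨?_, ?_⟩
    · show e * (e * z * e) * e = e * z * e
      simp only [mul_assoc, hswap, hee, he]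
    · intro y
      show (e * z * e) * (e * y * e) = (e * y * e) * (e * z * e)
      simp only [mul_assoc, hswap, hee, he]
  · -- InjOn
    intro z hz w hw hzw
    simp only at hzw
    rw [key z hz, key w hw] at hzw
    have h0 : z - w = 0 := by
      apply hinj
      rintro ⟨v, hv⟩
      obtain ⟨a, rfl⟩ := Submodule.mem_span_singleton.mp hv
      have hze := Subring.mem_center_iff.mp hz a
      have hwe := Subring.mem_center_iff.mp hw a
      show (z - w) * (a • e) = 0
      rw [smul_eq_mul, sub_mul, ← mul_assoc, ← mul_assoc, ← hze, ← hwe,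
        mul_assoc, mul_assoc, hzw, sub_self]
    exact sub_eq_zero.mp h0
  · -- SurjOn
    rintro x ⟨hx1, hx2⟩
    have hmem : ∀ v : leftIdealGenBy e, (v : A) * x ∈ leftIdealGenBy e := by
      intro v
      have h := mul_corner_mem_leftIdealGenBy e x (v : A)
      rwa [hx1] at h
    obtain ⟨a, ha⟩ := hsurj
      { toFun := fun v => ⟨(v : A) * x, hmem v⟩
        map_zero' := by apply Subtype.ext; simp
        map_add' := by intro u v; apply Subtype.ext; simp [add_mul] }
      (by
        intro y v
        show ((v : A) * (e * y * e)) * x = ((v : A) * x) * (e * y * e)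
        rw [mul_assoc, ← hx2 y, ← mul_assoc])
    have hfa : ∀ v : leftIdealGenBy e, (v : A) * x = a * (v : A) := by
      intro v
      have h := ha v
      simp only [AddMonoidHom.coe_mk, ZeroHom.coe_mk] at h
      exact h
    have hamem : a ∈ Subring.center A := by
      rw [Subring.mem_center_iff]
      intro b
      have h0 : b * a - a * b = 0 := by
        apply hinj
        intro v
        have hbv : b * (v : A) ∈ leftIdealGenBy e := Submodule.smul_mem _ b v.2
        have h1 := hfa ⟨b * (v : A), hbv⟩
        have h2 := hfa v
        simp only at h1
        rw [sub_mul, mul_assoc, ← h2, mul_assoc, ← h1, ← mul_assoc, sub_self]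
      exact sub_eq_zero.mp h0
    refine ⟨a, hamem, ?_⟩
    have hae : a * e = e * x := (hfa ⟨e, he1⟩).symm
    have hex : e * x = x := by
      conv_lhs => rw [← hx1]
      rw [← mul_assoc, ← mul_assoc, he]
      exact hx1
    show e * a * e = x
    rw [key a hamem, hae, hex]
  · -- multiplicativity
    intro z w hz hw
    have hz' := Subring.mem_center_iff.mp hz
    have hw' := Subring.mem_center_iff.mp hw
    have hswapz : ∀ g x : A, g * (z * x) = z * (g * x) := by
      intro g x; rw [← mul_assoc, hz' g, mul_assoc]
    have hswapw : ∀ x : A, e * (w * x) = w * (e * x) := by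
      intro x; rw [← mul_assoc, hw' e, mul_assoc]
    simp only [mul_assoc, hswapz, hswapw, hee, he]
  · rw [mul_one, he]
end

section
/- Let W = ⟨w⟩ be cyclic of order m ≥ 2 acting on h = ℂ by w·y = ζy for ζ a primitive m-th root of unity, and let Δ_{r,k} be the baby Verma module of the restricted rational Cherednik algebra of W attached to the character ρ_r (ρ_r(w) = ζ^r), with basis x^0,…,x^{m−1} and action x·x^l = x^{l+1}, y·x^l = −γ_{r,k}(l) x^{l−1}, w·x^l = ζ^{l+r} x^l. Let ε_{r,k} be the minimal 0 < l ≤ m−1 with γ_{r,k}(l) = 0 (and ε_{r,k} = m if no such l exists). Then the span of x^{ε_{r,k}},…,x^{m−1} is the radical (unique maximal submodule) of Δ_{r,k}; in particular dim L_{r,k} = ε_{r,k}, and Δ_{r,k} is irreducible iff ε_{r,k} = m. -/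
/-- `γ_{r,k}(l) = m(k_{m+1-r} - k_{m+1-r-l})` (indices mod `m`, `k_0 = 0`). -/
noncomputable def cycGamma (m : ℕ) (k : ZMod m → ℂ) (r l : ℕ) : ℂ :=
  (m : ℂ) * (k (((m : ℤ) + 1 - r : ℤ) : ZMod m) - k (((m : ℤ) + 1 - r - l : ℤ) : ZMod m))

/-- `ε_{r,k}`: the minimal `0 < l ≤ m-1` with `γ_{r,k}(l) = 0`, and `m` if there is none. -/
noncomputable def cycEps (m : ℕ) (k : ZMod m → ℂ) (r : ℕ) : ℕ :=
  sInf ({l : ℕ | 0 < l ∧ l ≤ m - 1 ∧ cycGamma m k r l = 0} ∪ {m})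

/-- Action of `x` on the baby Verma module `Δ_{r,k}` in the basis `x^0, …, x^{m-1}`:
`x·x^l = x^{l+1}` (and `x·x^{m-1} = 0`). -/
noncomputable def cycX (m : ℕ) : Matrix (Fin m) (Fin m) ℂ :=
  fun a b => if (a : ℕ) = (b : ℕ) + 1 then 1 else 0

/-- Action of `y` on `Δ_{r,k}`: `y·x^l = -γ_{r,k}(l)·x^{l-1}` (and `y·x^0 = 0`). -/
noncomputable def cycY (m : ℕ) (k : ZMod m → ℂ) (r : ℕ) : Matrix (Fin m) (Fin m) ℂ :=
  fun a b => if (b : ℕ) = (a : ℕ) + 1 then -cycGamma m k r (b : ℕ) else 0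

/-- Action of `w` on `Δ_{r,k}`: `w·x^l = ζ^{l+r}·x^l`. -/
noncomputable def cycW (m : ℕ) (ζ : ℂ) (r : ℕ) : Matrix (Fin m) (Fin m) ℂ :=
  Matrix.diagonal fun a => ζ ^ ((a : ℕ) + r)

section helpers

variable {m : ℕ} {k : ZMod m → ℂ} {r : ℕ} {ζ : ℂ}

lemma cycEps_mem (k : ZMod m → ℂ) (r : ℕ) :
    cycEps m k r ∈ ({l : ℕ | 0 < l ∧ l ≤ m - 1 ∧ cycGamma m k r l = 0} ∪ {m}) :=
  Nat.sInf_mem ⟨m, Or.inr rfl⟩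

lemma cycEps_le (k : ZMod m → ℂ) (r : ℕ) : cycEps m k r ≤ m :=
  Nat.sInf_le (Or.inr rfl)

lemma cycEps_pos (hm : 2 ≤ m) (k : ZMod m → ℂ) (r : ℕ) : 0 < cycEps m k r := by
  rcases cycEps_mem k r with h | h
  · exact h.1
  · simp only [Set.mem_singleton_iff] at h; omega

lemma cycGamma_cycEps (h : cycEps m k r < m) : cycGamma m k r (cycEps m k r) = 0 := by
  rcases cycEps_mem k r with hh | hh
  · exact hh.2.2
  · simp only [Set.mem_singleton_iff] at hh; omega

lemma cycGamma_ne_zero {l : ℕ} (h0 : 0 < l) (h1 : l < cycEps m k r) :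
    cycGamma m k r l ≠ 0 := by
  intro h
  have hle : cycEps m k r ≤ l := Nat.sInf_le (Or.inl ⟨h0, by have := cycEps_le k r; omega, h⟩)
  omega

lemma pi_single_eq_smul (b : Fin m) (x : ℂ) :
    (Pi.single b x : Fin m → ℂ) = x • (Pi.single b 1 : Fin m → ℂ) := by
  funext i
  simp [Pi.single_apply]

lemma X_single (b : Fin m) (hb : (b : ℕ) + 1 < m) :
    Matrix.toLin' (cycX m) (Pi.single b 1) = (Pi.single (⟨(b : ℕ) + 1, hb⟩ : Fin m) 1 : Fin m → ℂ) := by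
  funext a
  simp [Matrix.toLin'_apply, cycX, Pi.single_apply, Fin.ext_iff]

lemma X_single_last (b : Fin m) (hb : (b : ℕ) + 1 = m) :
    Matrix.toLin' (cycX m) (Pi.single b 1) = 0 := by
  funext a
  have : (a : ℕ) ≠ (b : ℕ) + 1 := by have := a.isLt; omega
  simp [Matrix.toLin'_apply, cycX, this]

lemma Y_single (b : Fin m) (c : ℕ) (hc : c < m) (hbc : (b : ℕ) = c + 1) :
    Matrix.toLin' (cycY m k r) (Pi.single b 1)
      = (-cycGamma m k r (b : ℕ)) • (Pi.single (⟨c, hc⟩ : Fin m) 1 : Fin m → ℂ) := by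
  funext a
  have : ((b : ℕ) = (a : ℕ) + 1) ↔ ((a : ℕ) = c) := by omega
  simp [Matrix.toLin'_apply, cycY, Pi.single_apply, Fin.ext_iff, this]

lemma W_apply (ζ : ℂ) (r : ℕ) (u : Fin m → ℂ) :
    Matrix.toLin' (cycW m ζ r) u = fun i : Fin m => ζ ^ ((i : ℕ) + r) * u i := by
  funext i
  simp [Matrix.toLin'_apply, cycW, Matrix.mulVec_diagonal]

lemma W_single (ζ : ℂ) (r : ℕ) (b : Fin m) :
    Matrix.toLin' (cycW m ζ r) (Pi.single b 1)
      = (ζ ^ ((b : ℕ) + r)) • (Pi.single b 1 : Fin m → ℂ) := by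
  rw [W_apply]
  funext a
  simp [Pi.single_apply]
  split_ifs with h <;> simp [h]

end helpers

section key

variable {m : ℕ} {k : ZMod m → ℂ} {r : ℕ} {ζ : ℂ}

lemma coord_mem (hm : 2 ≤ m) (hζ : IsPrimitiveRoot ζ m) (U : Submodule ℂ (Fin m → ℂ))
    (hw : Submodule.map (Matrix.toLin' (cycW m ζ r)) U ≤ U) {u : Fin m → ℂ} (hu : u ∈ U)
    (l : Fin m) : (Pi.single l (u l) : Fin m → ℂ) ∈ U := by
  set lam : Fin m → ℂ := fun i => ζ ^ ((i : ℕ) + r) with hlam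
  have hstep : ∀ v ∈ U, Matrix.toLin' (cycW m ζ r) v ∈ U := fun v hv =>
    hw (Submodule.mem_map_of_mem hv)
  have key : ∀ s : Finset (Fin m),
      (fun i : Fin m => (∏ j ∈ s, (lam i - lam j)) * u i) ∈ U := by
    intro s
    induction s using Finset.induction_on with
    | empty => simpa using hu
    | @insert a s ha ih =>
      have h1 := hstep _ ih
      have h2 : (fun i : Fin m => (∏ j ∈ insert a s, (lam i - lam j)) * u i)
          = Matrix.toLin' (cycW m ζ r) (fun i : Fin m => (∏ j ∈ s, (lam i - lam j)) * u i)
            - lam a • (fun i : Fin m => (∏ j ∈ s, (lam i - lam j)) * u i) := by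
        funext i
        rw [W_apply]
        simp only [Finset.prod_insert ha, Pi.sub_apply, Pi.smul_apply, smul_eq_mul]
        ring
      rw [h2]
      exact Submodule.sub_mem U h1 (Submodule.smul_mem U _ ih)
  have hinj : Function.Injective lam := by
    intro i j h
    have hz : ζ ^ r ≠ 0 := pow_ne_zero r (hζ.ne_zero (by omega))
    have : ζ ^ (i : ℕ) = ζ ^ (j : ℕ) := by
      have h' : ζ ^ (i : ℕ) * ζ ^ r = ζ ^ (j : ℕ) * ζ ^ r := by
        rw [← pow_add, ← pow_add]; exact h
      exact mul_right_cancel₀ hz h'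
    exact Fin.ext (hζ.pow_inj i.isLt j.isLt this)
  set c : ℂ := ∏ j ∈ Finset.univ.erase l, (lam l - lam j) with hc
  have hcne : c ≠ 0 := by
    rw [hc]
    exact Finset.prod_ne_zero_iff.2 fun j hj =>
      sub_ne_zero.2 fun h => (Finset.mem_erase.1 hj).1 (hinj h.symm)
  have hv := key (Finset.univ.erase l)
  have heq : (Pi.single l (u l) : Fin m → ℂ)
      = c⁻¹ • (fun i : Fin m => (∏ j ∈ Finset.univ.erase l, (lam i - lam j)) * u i) := by
    funext i
    by_cases hi : i = l
    · subst hi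
      simp only [Pi.single_eq_same, Pi.smul_apply, smul_eq_mul, ← hc]
      rw [← mul_assoc, inv_mul_cancel₀ hcne, one_mul]
    · have hz : (∏ j ∈ Finset.univ.erase l, (lam i - lam j)) = 0 :=
        Finset.prod_eq_zero (Finset.mem_erase.2 ⟨hi, Finset.mem_univ i⟩) (sub_self _)
      simp [Pi.single_apply, hi, hz]
  rw [heq]
  exact Submodule.smul_mem U _ hv

lemma single_one_mem (U : Submodule ℂ (Fin m → ℂ)) {b : Fin m} {x : ℂ} (hx : x ≠ 0)
    (h : (Pi.single b x : Fin m → ℂ) ∈ U) : (Pi.single b 1 : Fin m → ℂ) ∈ U := by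
  have := Submodule.smul_mem U x⁻¹ h
  rwa [pi_single_eq_smul, ← smul_assoc, smul_eq_mul, inv_mul_cancel₀ hx, one_smul] at this

lemma descend (U : Submodule ℂ (Fin m → ℂ))
    (hy : Submodule.map (Matrix.toLin' (cycY m k r)) U ≤ U) :
    ∀ n : ℕ, ∀ hn : n < m, n < cycEps m k r →
      (Pi.single (⟨n, hn⟩ : Fin m) 1 : Fin m → ℂ) ∈ U →
      (Pi.single (⟨0, by omega⟩ : Fin m) 1 : Fin m → ℂ) ∈ U := by
  intro n
  induction n with
  | zero => intro hn _ h; exact h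
  | succ c ih =>
    intro hn hlt h
    have hc : c < m := by omega
    have himg := hy (Submodule.mem_map_of_mem h)
    rw [Y_single (⟨c + 1, hn⟩ : Fin m) c hc rfl] at himg
    have hγ : cycGamma m k r (c + 1) ≠ 0 := cycGamma_ne_zero (by omega) hlt
    have : (Pi.single (⟨c, hc⟩ : Fin m) 1 : Fin m → ℂ) ∈ U := by
      have := Submodule.smul_mem U (-cycGamma m k r (c + 1))⁻¹ himg
      rwa [← smul_assoc, smul_eq_mul, inv_mul_cancel₀ (by simpa using hγ), one_smul] at this
    exact ih hc (by omega) this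

lemma ascend (U : Submodule ℂ (Fin m → ℂ))
    (hx : Submodule.map (Matrix.toLin' (cycX m)) U ≤ U)
    (hm : 2 ≤ m)
    (h0 : (Pi.single (⟨0, by omega⟩ : Fin m) 1 : Fin m → ℂ) ∈ U) :
    ∀ n : ℕ, ∀ hn : n < m, (Pi.single (⟨n, hn⟩ : Fin m) 1 : Fin m → ℂ) ∈ U := by
  intro n
  induction n with
  | zero => intro hn; exact h0
  | succ c ih =>
    intro hn
    have hc : c < m := by omega
    have himg := hx (Submodule.mem_map_of_mem (ih hc))
    rwa [X_single (⟨c, hc⟩ : Fin m) hn] at himg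

lemma eq_top_of_singles (U : Submodule ℂ (Fin m → ℂ))
    (h : ∀ b : Fin m, (Pi.single b 1 : Fin m → ℂ) ∈ U) : U = ⊤ := by
  rw [eq_top_iff]
  intro u _
  rw [← Finset.univ_sum_single u]
  exact Submodule.sum_mem U fun i _ => by
    rw [pi_single_eq_smul]; exact Submodule.smul_mem U _ (h i)

lemma mem_span_singles {ε : ℕ} (u : Fin m → ℂ) (h : ∀ l : Fin m, (l : ℕ) < ε → u l = 0) :
    u ∈ Submodule.span ℂ ((fun l : Fin m => (Pi.single l 1 : Fin m → ℂ)) ''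
      {l : Fin m | ε ≤ (l : ℕ)}) := by
  rw [← Finset.univ_sum_single u]
  refine Submodule.sum_mem _ fun i _ => ?_
  by_cases hi : ε ≤ (i : ℕ)
  · rw [pi_single_eq_smul]
    exact Submodule.smul_mem _ _ (Submodule.subset_span ⟨i, hi, rfl⟩)
  · rw [h i (by omega)]
    simp

end key



/-- For the cyclic group of order `m ≥ 2`, the span of `x^{ε_{r,k}}, …, x^{m-1}` is the
radical (= unique maximal submodule) of the baby Verma module `Δ_{r,k}` of the restricted
rational Cherednik algebra; in particular `dim L_{r,k} = ε_{r,k}`, and `Δ_{r,k}` is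
irreducible iff `ε_{r,k} = m`. (A submodule is a subspace invariant under the generators
`x`, `y`, `w`.) -/
theorem cyclic_baby_verma_radical (m : ℕ) (hm : 2 ≤ m) (ζ : ℂ) (hζ : IsPrimitiveRoot ζ m)
    (k : ZMod m → ℂ) (hk0 : k 0 = 0) (r : ℕ) (hr : r ≤ m - 1) :
    (Submodule.map (Matrix.toLin' (cycX m))
        (Submodule.span ℂ ((fun l : Fin m => (Pi.single l 1 : Fin m → ℂ)) ''
          {l : Fin m | cycEps m k r ≤ (l : ℕ)}))
      ≤ Submodule.span ℂ ((fun l : Fin m => (Pi.single l 1 : Fin m → ℂ)) ''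
          {l : Fin m | cycEps m k r ≤ (l : ℕ)})) ∧
    (Submodule.map (Matrix.toLin' (cycY m k r))
        (Submodule.span ℂ ((fun l : Fin m => (Pi.single l 1 : Fin m → ℂ)) ''
          {l : Fin m | cycEps m k r ≤ (l : ℕ)}))
      ≤ Submodule.span ℂ ((fun l : Fin m => (Pi.single l 1 : Fin m → ℂ)) ''
          {l : Fin m | cycEps m k r ≤ (l : ℕ)})) ∧
    (Submodule.map (Matrix.toLin' (cycW m ζ r))
        (Submodule.span ℂ ((fun l : Fin m => (Pi.single l 1 : Fin m → ℂ)) ''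
          {l : Fin m | cycEps m k r ≤ (l : ℕ)}))
      ≤ Submodule.span ℂ ((fun l : Fin m => (Pi.single l 1 : Fin m → ℂ)) ''
          {l : Fin m | cycEps m k r ≤ (l : ℕ)})) ∧
    (Submodule.span ℂ ((fun l : Fin m => (Pi.single l 1 : Fin m → ℂ)) ''
        {l : Fin m | cycEps m k r ≤ (l : ℕ)}) ≠ ⊤) ∧
    (∀ U : Submodule ℂ (Fin m → ℂ),
      Submodule.map (Matrix.toLin' (cycX m)) U ≤ U →
      Submodule.map (Matrix.toLin' (cycY m k r)) U ≤ U →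
      Submodule.map (Matrix.toLin' (cycW m ζ r)) U ≤ U →
      U ≠ ⊤ →
      U ≤ Submodule.span ℂ ((fun l : Fin m => (Pi.single l 1 : Fin m → ℂ)) ''
            {l : Fin m | cycEps m k r ≤ (l : ℕ)})) ∧
    (Module.finrank ℂ ((Fin m → ℂ) ⧸
        Submodule.span ℂ ((fun l : Fin m => (Pi.single l 1 : Fin m → ℂ)) ''
          {l : Fin m | cycEps m k r ≤ (l : ℕ)})) = cycEps m k r) ∧
    ((∀ U : Submodule ℂ (Fin m → ℂ),
        Submodule.map (Matrix.toLin' (cycX m)) U ≤ U →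
        Submodule.map (Matrix.toLin' (cycY m k r)) U ≤ U →
        Submodule.map (Matrix.toLin' (cycW m ζ r)) U ≤ U →
        U = ⊥ ∨ U = ⊤) ↔ cycEps m k r = m) := by
  have hle : cycEps m k r ≤ m := cycEps_le k r
  have hpos : 0 < cycEps m k r := cycEps_pos hm k r
  set ε := cycEps m k r with hε
  set S := Submodule.span ℂ ((fun l : Fin m => (Pi.single l 1 : Fin m → ℂ)) ''
      {l : Fin m | ε ≤ (l : ℕ)}) with hS
  set π : (Fin m → ℂ) →ₗ[ℂ] (Fin ε → ℂ) := LinearMap.funLeft ℂ ℂ (Fin.castLE hle) with hπ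
  -- S = ker π
  have hSker : S = LinearMap.ker π := by
    apply le_antisymm
    · rw [hS, Submodule.span_le]
      rintro _ ⟨l, hl, rfl⟩
      simp only [SetLike.mem_coe, LinearMap.mem_ker]
      funext i
      have hne : Fin.castLE hle i ≠ l := by
        intro h
        have : (i : ℕ) = (l : ℕ) := congrArg Fin.val h
        have hi := i.isLt
        simp only [Set.mem_setOf_eq] at hl
        omega
      simp [hπ, LinearMap.funLeft_apply, Pi.single_apply, hne]
    · intro u hu
      rw [hS]
      apply mem_span_singles
      intro l hl
      have := congrFun (LinearMap.mem_ker.1 hu) ⟨(l : ℕ), hl⟩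
      simp only [hπ, LinearMap.funLeft_apply, Function.comp_apply, Pi.zero_apply] at this
      have hcast : Fin.castLE hle (⟨(l : ℕ), hl⟩ : Fin ε) = l := Fin.ext rfl
      rwa [hcast] at this
  have hsurj : Function.Surjective π :=
    LinearMap.funLeft_surjective_of_injective ℂ ℂ _ (Fin.castLE_injective hle)
  -- part 1: x-invariance
  have p1 : Submodule.map (Matrix.toLin' (cycX m)) S ≤ S := by
    rw [hS, Submodule.map_span_le]
    rintro _ ⟨l, hl, rfl⟩
    simp only [Set.mem_setOf_eq] at hl
    by_cases h : (l : ℕ) + 1 < m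
    · rw [X_single l h]
      exact Submodule.subset_span ⟨⟨(l : ℕ) + 1, h⟩, by simp; omega, rfl⟩
    · rw [X_single_last l (by have := l.isLt; omega)]
      exact Submodule.zero_mem _
  -- part 2: y-invariance
  have p2 : Submodule.map (Matrix.toLin' (cycY m k r)) S ≤ S := by
    rw [hS, Submodule.map_span_le]
    rintro _ ⟨l, hl, rfl⟩
    simp only [Set.mem_setOf_eq] at hl
    obtain ⟨c, hc⟩ : ∃ c, (l : ℕ) = c + 1 := ⟨(l : ℕ) - 1, by omega⟩
    have hcm : c < m := by have := l.isLt; omega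
    rw [Y_single l c hcm hc]
    by_cases hl' : ε ≤ c
    · exact Submodule.smul_mem _ _ (Submodule.subset_span ⟨⟨c, hcm⟩, hl', rfl⟩)
    · have hlε : (l : ℕ) = ε := by omega
      have hγ : cycGamma m k r (l : ℕ) = 0 := by
        rw [hlε]; exact cycGamma_cycEps (by have := l.isLt; omega)
      rw [hγ, neg_zero, zero_smul]
      exact Submodule.zero_mem _
  -- part 3: w-invariance
  have p3 : Submodule.map (Matrix.toLin' (cycW m ζ r)) S ≤ S := by
    rw [hS, Submodule.map_span_le]
    rintro _ ⟨l, hl, rfl⟩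
    rw [W_single]
    exact Submodule.smul_mem _ _ (Submodule.subset_span ⟨l, hl, rfl⟩)
  -- part 4: properness
  have p4 : S ≠ ⊤ := by
    intro h
    have h0 : (Pi.single (⟨0, by omega⟩ : Fin m) 1 : Fin m → ℂ) ∈ S := h ▸ Submodule.mem_top
    rw [hSker, LinearMap.mem_ker] at h0
    have := congrFun h0 ⟨0, hpos⟩
    simp only [hπ, LinearMap.funLeft_apply, Function.comp_apply, Pi.zero_apply] at this
    have hcast : Fin.castLE hle (⟨0, hpos⟩ : Fin ε) = (⟨0, by omega⟩ : Fin m) := Fin.ext rfl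
    rw [hcast, Pi.single_eq_same] at this
    exact one_ne_zero this
  -- part 5: maximality
  have p5 : ∀ U : Submodule ℂ (Fin m → ℂ),
      Submodule.map (Matrix.toLin' (cycX m)) U ≤ U →
      Submodule.map (Matrix.toLin' (cycY m k r)) U ≤ U →
      Submodule.map (Matrix.toLin' (cycW m ζ r)) U ≤ U →
      U ≠ ⊤ → U ≤ S := by
    intro U hxU hyU hwU hne u hu
    have hzero : ∀ l : Fin m, (l : ℕ) < ε → u l = 0 := by
      intro l hl
      by_contra hne0
      have h1 : (Pi.single l (u l) : Fin m → ℂ) ∈ U := coord_mem hm hζ U hwU hu l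
      have h2 : (Pi.single l 1 : Fin m → ℂ) ∈ U := single_one_mem U hne0 h1
      have h2' : (Pi.single (⟨(l : ℕ), l.isLt⟩ : Fin m) 1 : Fin m → ℂ) ∈ U := by
        rwa [show (⟨(l : ℕ), l.isLt⟩ : Fin m) = l from Fin.ext rfl]
      have h3 := descend U hyU (l : ℕ) l.isLt hl h2'
      have h4 : U = ⊤ := by
        apply eq_top_of_singles U
        intro b
        have := ascend U hxU hm h3 (b : ℕ) b.isLt
        rwa [show (⟨(b : ℕ), b.isLt⟩ : Fin m) = b from Fin.ext rfl] at this
      exact hne h4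
    rw [hS]
    exact mem_span_singles u hzero
  refine ⟨p1, p2, p3, p4, p5, ?_, ?_⟩
  · -- finrank
    have e1 : ((Fin m → ℂ) ⧸ S) ≃ₗ[ℂ] (Fin ε → ℂ) :=
      (Submodule.quotEquivOfEq S (LinearMap.ker π) hSker).trans
        (π.quotKerEquivOfSurjective hsurj)
    rw [e1.finrank_eq, Module.finrank_fin_fun]
  · constructor
    · intro hall
      have hSbot : S = ⊥ := (hall S p1 p2 p3).resolve_right p4
      by_contra hne'
      have hlt : ε < m := lt_of_le_of_ne hle hne'
      have hmem : (Pi.single (⟨ε, hlt⟩ : Fin m) 1 : Fin m → ℂ) ∈ S :=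
        Submodule.subset_span ⟨⟨ε, hlt⟩, le_refl ε, rfl⟩
      rw [hSbot, Submodule.mem_bot] at hmem
      have := congrFun hmem ⟨ε, hlt⟩
      rw [Pi.single_eq_same] at this
      exact one_ne_zero this
    · intro heq U hxU hyU hwU
      by_cases hU : U = ⊤
      · exact Or.inr hU
      · left
        have hUS : U ≤ S := p5 U hxU hyU hwU hU
        have hSbot : S ≤ ⊥ := by
          rw [hSker]
          intro u hu
          rw [Submodule.mem_bot]
          funext l
          have := congrFun (LinearMap.mem_ker.1 hu) ⟨(l : ℕ), by rw [heq]; exact l.isLt⟩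
          simp only [hπ, LinearMap.funLeft_apply, Function.comp_apply, Pi.zero_apply] at this
          rwa [show Fin.castLE hle (⟨(l : ℕ), by rw [heq]; exact l.isLt⟩ : Fin ε) = l
            from Fin.ext rfl] at this
        exact le_bot_iff.1 (le_trans hUS hSbot)
end

section
/- For the cyclic group of order m with semisimple restricted rational Cherednik algebra H̄_k, the Schur element of the simple module L_{r,k} with respect to the standard symmetrizing trace Φ_k (with Φ_k(x^i y^j w^q) = δ_{i,m−1}δ_{j,m−1}δ_{q,0}) equals S_{r,k} = (−1)^{m−1} m^m ∏_{t=0, t ≢ m+1−r mod m}^{m−1} (k_{m+1−r} − k_t). -/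
open Finset Polynomial

lemma lagrange_key {ι : Type*} [DecidableEq ι] (s : Finset ι) (v : ι → ℂ)
    (hvs : Set.InjOn v s) (hs : 2 ≤ s.card) :
    ∑ a ∈ s, ∏ b ∈ s.erase a, (v a - v b)⁻¹ = 0 := by
  have hne : s.Nonempty := Finset.card_pos.mp (by omega)
  have h := Lagrange.sum_basis hvs hne
  have h2 := congrArg (fun p => Polynomial.coeff p (s.card - 1)) h
  simp only [Polynomial.finset_sum_coeff, Polynomial.coeff_one] at h2
  have hco : ∀ a ∈ s, (Lagrange.basis s v a).coeff (s.card - 1)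
      = ∏ b ∈ s.erase a, (v a - v b)⁻¹ := by
    intro a ha
    have hd := Lagrange.natDegree_basis hvs ha
    rw [← hd, Polynomial.coeff_natDegree]
    rw [Lagrange.basis, Polynomial.leadingCoeff_prod]
    refine Finset.prod_congr rfl fun b hb => ?_
    have hab : v a ≠ v b := by
      rcases Finset.mem_erase.mp hb with ⟨hba, hbs⟩
      exact fun h => hba (hvs hbs ha h.symm)
    rw [Lagrange.basisDivisor, Polynomial.leadingCoeff_mul, Polynomial.leadingCoeff_C,
      Polynomial.leadingCoeff_X_sub_C, mul_one]
  rw [Finset.sum_congr rfl hco] at h2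
  rw [h2, if_neg (by omega)]

lemma natCast_zmod_ne_zero (m t : ℕ) (h1 : 1 ≤ t) (h2 : t < m) : (t : ZMod m) ≠ 0 := by
  rw [Ne, ZMod.natCast_eq_zero_iff]
  intro h; exact absurd (Nat.le_of_dvd (by omega) h) (by omega)

lemma zmod_val_sub_cast (m : ℕ) [NeZero m] (s : ZMod m) (t : ℕ) :
    (((s - (t : ZMod m)).val : ZMod m)) = s - (t : ZMod m) := by
  rw [ZMod.natCast_val, ZMod.cast_id]

lemma prod_reindex_full (m : ℕ) (hm : 2 ≤ m) (k : ZMod m → ℂ) (s : ZMod m) :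
    ∏ t ∈ (Finset.range m).filter (fun t : ℕ => (t : ZMod m) ≠ s), (k s - k (t : ZMod m))
      = ∏ t ∈ Finset.Icc 1 (m-1), (k s - k (s - (t : ZMod m))) := by
  haveI : NeZero m := ⟨by omega⟩
  refine Finset.prod_nbij' (fun t => (s - (t : ZMod m)).val) (fun t => (s - (t : ZMod m)).val)
    ?_ ?_ ?_ ?_ ?_
  · intro t ht
    rcases Finset.mem_filter.mp ht with ⟨htr, hts⟩
    have h1 : s - (t : ZMod m) ≠ 0 := fun h => hts (sub_eq_zero.mp h).symm
    have h2 : (s - (t : ZMod m)).val ≠ 0 := fun h => h1 (by rwa [← ZMod.val_eq_zero])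
    have h3 : (s - (t : ZMod m)).val < m := ZMod.val_lt _
    simp only [Finset.mem_Icc]; omega
  · intro t ht
    rcases Finset.mem_Icc.mp ht with ⟨h1, h2⟩
    have htm : (t : ZMod m) ≠ 0 := natCast_zmod_ne_zero m t h1 (by omega)
    have h1' : s - (t : ZMod m) ≠ s := by
      intro h; apply htm; have := sub_eq_self.mp h; simpa using this
    refine Finset.mem_filter.mpr ⟨Finset.mem_range.mpr (ZMod.val_lt _), ?_⟩
    rw [zmod_val_sub_cast]
    exact h1'
  · intro t ht
    rcases Finset.mem_filter.mp ht with ⟨htr, hts⟩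
    show (s - (((s - (t : ZMod m)).val : ℕ) : ZMod m)).val = t
    rw [zmod_val_sub_cast, sub_sub_cancel, ZMod.val_natCast_of_lt (Finset.mem_range.mp htr)]
  · intro t ht
    show (s - (((s - (t : ZMod m)).val : ℕ) : ZMod m)).val = t
    rw [zmod_val_sub_cast, sub_sub_cancel, ZMod.val_natCast_of_lt (by
      rcases Finset.mem_Icc.mp ht with ⟨h1, h2⟩; omega)]
  · intro t ht
    rw [zmod_val_sub_cast, sub_sub_cancel]

lemma diag_vanish (m i d : ℕ) (hi : i + 2 ≤ m) (k : ZMod m → ℂ)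
    (hinj : ∀ a b : ZMod m, a ≠ b → k a ≠ k b) :
    ∑ l ∈ Finset.Icc i (m-1), (∏ t ∈ Finset.Icc 1 (m-1) \ Finset.Icc (l-i+1) l,
      (k ((l : ZMod m) + 1 - (d : ZMod m))
        - k ((l : ZMod m) + 1 - (d : ZMod m) - (t : ZMod m))))⁻¹ = 0 := by
  haveI : NeZero m := ⟨by omega⟩
  set v : ℕ → ℂ := fun l => k ((l : ZMod m) + 1 - (d : ZMod m)) with hv
  have hcastinj : ∀ a ∈ Finset.Icc i (m-1), ∀ b ∈ Finset.Icc i (m-1),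
      (a : ZMod m) = (b : ZMod m) → a = b := by
    intro a ha b hb h
    rcases Finset.mem_Icc.mp ha with ⟨_, ha2⟩
    rcases Finset.mem_Icc.mp hb with ⟨_, hb2⟩
    have := congrArg ZMod.val h
    rwa [ZMod.val_natCast_of_lt (by omega), ZMod.val_natCast_of_lt (by omega)] at this
  have hvinj : Set.InjOn v (Finset.Icc i (m-1)) := by
    intro a ha b hb h
    by_contra hab
    have h1 : ((a : ZMod m) + 1 - (d : ZMod m)) ≠ ((b : ZMod m) + 1 - (d : ZMod m)) := by
      intro h2
      exact hab (hcastinj a ha b hb (by linear_combination h2))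
    exact hinj _ _ h1 h
  have key := lagrange_key (Finset.Icc i (m-1)) v hvinj (by
    rw [Nat.card_Icc]; omega)
  rw [← key]
  refine Finset.sum_congr rfl fun l hl => ?_
  rcases Finset.mem_Icc.mp hl with ⟨hli, hlm⟩
  rw [← Finset.prod_inv_distrib]
  refine Finset.prod_nbij' (fun t => if t ≤ l then l - t else l + m - t)
    (fun b => if b < l then l - b else l + m - b) ?_ ?_ ?_ ?_ ?_
  · intro t ht
    rcases Finset.mem_sdiff.mp ht with ⟨ht1, ht2⟩
    rcases Finset.mem_Icc.mp ht1 with ⟨h1, h2⟩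
    rw [Finset.mem_Icc] at ht2
    rw [Finset.mem_erase, Finset.mem_Icc]
    split <;> omega
  · intro b hb
    rcases Finset.mem_erase.mp hb with ⟨hb1, hb2⟩
    rcases Finset.mem_Icc.mp hb2 with ⟨h1, h2⟩
    rw [Finset.mem_sdiff, Finset.mem_Icc, Finset.mem_Icc]
    constructor
    · split <;> omega
    · split <;> omega
  · intro t ht
    rcases Finset.mem_sdiff.mp ht with ⟨ht1, ht2⟩
    rcases Finset.mem_Icc.mp ht1 with ⟨h1, h2⟩
    rw [Finset.mem_Icc] at ht2
    split <;> split <;> omega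
  · intro b hb
    rcases Finset.mem_erase.mp hb with ⟨hb1, hb2⟩
    rcases Finset.mem_Icc.mp hb2 with ⟨h1, h2⟩
    split <;> split <;> omega
  · intro t ht
    rcases Finset.mem_sdiff.mp ht with ⟨ht1, ht2⟩
    rcases Finset.mem_Icc.mp ht1 with ⟨h1, h2⟩
    rw [Finset.mem_Icc] at ht2
    have hcast : ((if t ≤ l then l - t else l + m - t : ℕ) : ZMod m)
        = (l : ZMod m) - (t : ZMod m) := by
      split
      · rw [Nat.cast_sub (by omega)]
      · rw [Nat.cast_sub (by omega)]
        push_cast [ZMod.natCast_self]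
        ring
    simp only [hv]
    rw [hcast]
    congr 2
    ring

/-- **Schur elements of the restricted rational Cherednik algebra of a cyclic group.**
Assume the algebra `H̄_k` of the cyclic group of order `m` is semisimple (`hss`). Its
symmetrizing trace takes the value `Φ_k(x^i y^j w^q) = δ_{i,m-1} δ_{j,m-1} δ_{q,0}` on the
PBW basis, and the character of the simple module `L_{r,k}` is given by the explicit formula
`χ_{r,k}(x^i y^j w^q) = δ_{ij}(−m)^i ζ^{qr} ∑_{l=i}^{m−1} ζ^{ql}
∏_{t=l−i+1}^{l} (k_{m+1−r} − k_{m+1−r−t})`. The Schur elements, uniquely determined by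
`Φ_k = ∑_r (1/S_{r,k}) χ_{r,k}`, are
`S_{r,k} = (−1)^{m−1} m^m ∏_{t ≢ m+1−r (mod m)} (k_{m+1−r} − k_t)`. -/
theorem cyclic_rrca_schur_elements (m : ℕ) (hm : 2 ≤ m) (ζ : ℂ)
    (hζ : IsPrimitiveRoot ζ m) (k : ZMod m → ℂ) (hk0 : k 0 = 0)
    (hss : ∀ r < m, ∏ t ∈ Finset.filter
        (fun t : ℕ => ((t : ZMod m)) ≠ (((m : ℤ) + 1 - r : ℤ) : ZMod m)) (Finset.range m),
        (k (((m : ℤ) + 1 - r : ℤ) : ZMod m) - k (t : ZMod m)) ≠ 0)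
    (S : ℕ → ℂ)
    (hS : ∀ r : ℕ, S r = (-1 : ℂ) ^ (m - 1) * (m : ℂ) ^ m *
      ∏ t ∈ Finset.filter
        (fun t : ℕ => ((t : ZMod m)) ≠ (((m : ℤ) + 1 - r : ℤ) : ZMod m)) (Finset.range m),
        (k (((m : ℤ) + 1 - r : ℤ) : ZMod m) - k (t : ZMod m)))
    (χ : ℕ → ℕ → ℕ → ℕ → ℂ)
    (hχ : ∀ r i j q : ℕ, χ r i j q =
      if i = j then
        (-(m : ℂ)) ^ i * ζ ^ (q * r) *
          ∑ l ∈ Finset.Icc i (m - 1), ζ ^ (q * l) *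
            ∏ t ∈ Finset.Icc (l - i + 1) l,
              (k (((m : ℤ) + 1 - r : ℤ) : ZMod m) - k (((m : ℤ) + 1 - r - t : ℤ) : ZMod m))
      else 0) :
    ∀ i < m, ∀ j < m, ∀ q < m,
      (if i = m - 1 ∧ j = m - 1 ∧ q = 0 then (1 : ℂ) else 0)
        = ∑ r ∈ Finset.range m, (S r)⁻¹ * χ r i j q := by
  haveI : NeZero m := ⟨by omega⟩
  have hm0 : (m : ℂ) ≠ 0 := Nat.cast_ne_zero.mpr (by omega)
  have hcast1 : ∀ r : ℕ, (((m : ℤ) + 1 - r : ℤ) : ZMod m) = 1 - (r : ZMod m) := by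
    intro r
    push_cast
    rw [ZMod.natCast_self]
    ring
  have hcast2 : ∀ r t : ℕ, (((m : ℤ) + 1 - r - t : ℤ) : ZMod m)
      = 1 - (r : ZMod m) - (t : ZMod m) := by
    intro r t
    push_cast
    rw [ZMod.natCast_self]
    ring
  have hFne : ∀ s : ZMod m,
      ∏ t ∈ Finset.Icc 1 (m-1), (k s - k (s - (t : ZMod m))) ≠ 0 := by
    intro s
    have h := hss ((1 - s).val) (ZMod.val_lt _)
    simp only [hcast1] at h
    have e : (1 : ZMod m) - (((1 - s).val : ℕ) : ZMod m) = s := by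
      rw [ZMod.natCast_val, ZMod.cast_id]; ring
    rw [e] at h
    rwa [prod_reindex_full m hm k s] at h
  have hfac : ∀ (s : ZMod m), ∀ t ∈ Finset.Icc 1 (m-1),
      k s - k (s - (t : ZMod m)) ≠ 0 :=
    fun s t ht => Finset.prod_ne_zero_iff.mp (hFne s) t ht
  have hinj : ∀ a b : ZMod m, a ≠ b → k a ≠ k b := by
    intro a b hab
    have h1 : a - b ≠ 0 := sub_ne_zero.mpr hab
    have h2 : (a - b).val ∈ Finset.Icc 1 (m-1) := by
      have h3 : (a - b).val ≠ 0 := fun h => h1 (by rwa [← ZMod.val_eq_zero])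
      have h4 : (a - b).val < m := ZMod.val_lt _
      rw [Finset.mem_Icc]; omega
    have := hfac a ((a - b).val) h2
    rw [ZMod.natCast_val, ZMod.cast_id, sub_sub_cancel] at this
    exact sub_ne_zero.mp this
  have hzm : ζ ^ m = 1 := hζ.pow_eq_one
  have hzcong : ∀ a b : ℕ, a % m = b % m → ζ ^ a = ζ ^ b := by
    intro a b h
    rw [← Nat.div_add_mod a m, ← Nat.div_add_mod b m, pow_add, pow_add, pow_mul, pow_mul,
      hzm, one_pow, one_pow, h]
  have hgeom : ∀ q : ℕ, q < m →
      ∑ r ∈ Finset.range m, ζ ^ (q * r) = if q = 0 then (m : ℂ) else 0 := by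
    intro q hq
    by_cases hq0 : q = 0
    · subst hq0; simp
    · rw [if_neg hq0]
      have h1 : ζ ^ q ≠ 1 := hζ.pow_ne_one_of_pos_of_lt (by omega) hq
      have h2 : ∀ r, ζ ^ (q * r) = (ζ ^ q) ^ r := fun r => by rw [← pow_mul]
      simp only [h2]
      rw [geom_sum_eq h1 m, ← pow_mul, mul_comm q m, pow_mul, hzm, one_pow, sub_self,
        zero_div]
  intro i hi j hj q hq
  by_cases hij : i = j
  swap
  · rw [if_neg (by omega), Finset.sum_eq_zero]
    intro r hr
    rw [hχ, if_neg hij, mul_zero]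
  subst hij
  by_cases him : i = m - 1
  · subst him
    have hterm : ∀ r ∈ Finset.range m, (S r)⁻¹ * χ r (m-1) (m-1) q
        = ζ ^ (q * r) * (ζ ^ (q * (m-1)) * (m : ℂ)⁻¹) := by
      intro r hr
      rw [hS r, hχ, if_pos rfl, Finset.Icc_self, Finset.sum_singleton]
      have e1 : m - 1 - (m - 1) + 1 = 1 := by omega
      rw [e1]
      simp only [hcast1, hcast2]
      rw [prod_reindex_full m hm k (1 - (r : ZMod m))]
      have hF := hFne (1 - (r : ZMod m))
      rw [neg_pow]
      have hmm : (m : ℂ) ^ m = (m : ℂ) ^ (m-1) * m := by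
        rw [← pow_succ]; congr 1; omega
      rw [hmm]
      have hn1 : ((-1 : ℂ)) ^ (m-1) ≠ 0 := pow_ne_zero _ (by norm_num)
      have hmn : (m : ℂ) ^ (m-1) ≠ 0 := pow_ne_zero _ hm0
      field_simp
      ring
    rw [Finset.sum_congr rfl hterm, ← Finset.sum_mul, hgeom q hq]
    by_cases hq0 : q = 0
    · subst hq0
      rw [if_pos ⟨rfl, rfl, rfl⟩, if_pos rfl, Nat.zero_mul, pow_zero, one_mul]
      field_simp
    · rw [if_neg (by tauto), if_neg hq0, zero_mul]
  · -- i < m - 1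
    rw [if_neg (by omega)]
    have him2 : i + 2 ≤ m := by omega
    have hsub : ∀ l ∈ Finset.Icc i (m-1), Finset.Icc (l-i+1) l ⊆ Finset.Icc 1 (m-1) := by
      intro l hl
      rcases Finset.mem_Icc.mp hl with ⟨h1, h2⟩
      intro t ht
      rcases Finset.mem_Icc.mp ht with ⟨h3, h4⟩
      rw [Finset.mem_Icc]; omega
    have hterm : ∀ r ∈ Finset.range m, (S r)⁻¹ * χ r i i q
        = ((-(m:ℂ))^i * ((-1:ℂ)^(m-1) * (m:ℂ)^m)⁻¹) * ∑ l ∈ Finset.Icc i (m-1),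
            (ζ^(q*r) * ζ^(q*l)) * (∏ t ∈ Finset.Icc 1 (m-1) \ Finset.Icc (l-i+1) l,
              (k (1 - (r:ZMod m)) - k (1 - (r:ZMod m) - (t:ZMod m))))⁻¹ := by
      intro r hr
      rw [hS r, hχ, if_pos rfl]
      simp only [hcast1, hcast2]
      rw [prod_reindex_full m hm k (1 - (r : ZMod m))]
      rw [Finset.mul_sum, Finset.mul_sum, Finset.mul_sum]
      refine Finset.sum_congr rfl fun l hl => ?_
      rw [← Finset.prod_sdiff (hsub l hl)]
      have hE : ∏ t ∈ Finset.Icc 1 (m-1) \ Finset.Icc (l-i+1) l,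
          (k (1 - (r:ZMod m)) - k (1 - (r:ZMod m) - (t:ZMod m))) ≠ 0 :=
        Finset.prod_ne_zero_iff.mpr fun t ht => hfac _ t (Finset.mem_sdiff.mp ht).1
      have hD : ∏ t ∈ Finset.Icc (l-i+1) l,
          (k (1 - (r:ZMod m)) - k (1 - (r:ZMod m) - (t:ZMod m))) ≠ 0 :=
        Finset.prod_ne_zero_iff.mpr fun t ht => hfac _ t (hsub l hl ht)
      have hn1 : ((-1 : ℂ)) ^ (m-1) ≠ 0 := pow_ne_zero _ (by norm_num)
      have hmn : (m : ℂ) ^ m ≠ 0 := pow_ne_zero _ hm0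
      field_simp
    rw [Finset.sum_congr rfl hterm, ← Finset.mul_sum]
    symm
    refine mul_eq_zero_of_right _ ?_
    rw [Finset.sum_comm]
    have hre : ∀ l ∈ Finset.Icc i (m-1),
        ∑ r ∈ Finset.range m, (ζ^(q*r) * ζ^(q*l)) *
            (∏ t ∈ Finset.Icc 1 (m-1) \ Finset.Icc (l-i+1) l,
              (k (1 - (r:ZMod m)) - k (1 - (r:ZMod m) - (t:ZMod m))))⁻¹
        = ∑ d ∈ Finset.range m, ζ^(q*d) *
            (∏ t ∈ Finset.Icc 1 (m-1) \ Finset.Icc (l-i+1) l,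
              (k ((l:ZMod m) + 1 - (d:ZMod m))
                - k ((l:ZMod m) + 1 - (d:ZMod m) - (t:ZMod m))))⁻¹ := by
      intro l hl
      rcases Finset.mem_Icc.mp hl with ⟨hli, hlm⟩
      refine Finset.sum_nbij' (fun r => (r + l) % m) (fun d => (d + (m - l)) % m)
        ?_ ?_ ?_ ?_ ?_
      · intro r hr
        exact Finset.mem_range.mpr (Nat.mod_lt _ (by omega))
      · intro d hd
        exact Finset.mem_range.mpr (Nat.mod_lt _ (by omega))
      · intro r hr
        have hrm : r < m := Finset.mem_range.mp hr
        show ((r + l) % m + (m - l)) % m = r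
        rw [Nat.mod_add_mod]
        have e : r + l + (m - l) = r + m := by omega
        rw [e, Nat.add_mod_right, Nat.mod_eq_of_lt hrm]
      · intro d hd
        have hdm : d < m := Finset.mem_range.mp hd
        show ((d + (m - l)) % m + l) % m = d
        rw [Nat.mod_add_mod]
        have e : d + (m - l) + l = d + m := by omega
        rw [e, Nat.add_mod_right, Nat.mod_eq_of_lt hdm]
      · intro r hr
        have h1 : ζ^(q*r) * ζ^(q*l) = ζ^(q*((r+l) % m)) := by
          rw [← pow_add, ← Nat.left_distrib]
          exact hzcong _ _ ((Nat.mod_modEq (r+l) m).mul_left q).symm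
        have h2 : (1 : ZMod m) - (r : ZMod m)
            = (l : ZMod m) + 1 - ((((r + l) % m : ℕ)) : ZMod m) := by
          rw [ZMod.natCast_mod]
          push_cast
          ring
        rw [h1, h2]
    rw [Finset.sum_congr rfl hre, Finset.sum_comm]
    refine Finset.sum_eq_zero fun d hd => ?_
    rw [← Finset.mul_sum, diag_vanish m i d him2 k hinj, mul_zero]
end

section
/- Let m ≥ 2 and consider ℂ[x₁,x₂] with the lexicographic monomial order with x₁ > x₂. The polynomials x₁^m + x₂^m, x₁x₂, and x₂^{m+1} form a Gröbner basis of the ideal they generate, and the monomials 1, x₁^i for 1 ≤ i ≤ m−1, and x₂^j for 1 ≤ j ≤ m form a ℂ-basis of the quotient ring ℂ[x₁,x₂]/(x₁^m + x₂^m, x₁x₂). -/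
/-!
Writing a member of `I = (x₁^m + x₂^m, x₁x₂)` as `a (x₁^m + x₂^m) + b x₁x₂` and reading off
coefficients, it has coefficient zero at every standard monomial `x₁^i` (`i < m`), `x₂^j`
(`1 ≤ j < m`), while its coefficients at `x₂^m` and `x₁^m` agree. As `x₁^m` is lex-larger than
all standard monomials, a nonzero member of `I` can have neither a standard leading monomial
(the Gröbner property) nor support inside the standard monomials (linear independence in the
quotient). Conversely, every other monomial is `x₁^m ≡ -x₂^m` or is divisible by one of
`x₁x₂, x₁^{m+1}, x₂^{m+1} ∈ I`, so the standard monomials span the quotient.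
-/

open MvPolynomial

/-- The monomials `1, x₁^i (1 ≤ i ≤ m-1), x₂^j (1 ≤ j ≤ m)`, enumerated by `Fin (2m)`. -/
noncomputable def dihedralCoinvMonomial (m : ℕ) (t : Fin (2 * m)) :
    MvPolynomial (Fin 2) ℂ :=
  if (t : ℕ) < m then X 0 ^ (t : ℕ) else X 1 ^ ((t : ℕ) - m + 1)

open Finsupp (single single_apply single_le_single)

namespace DihedralCoinvariant

variable {R : Type*} {m : ℕ}

section General

variable [CommSemiring R]

lemma monomial_mem_of_le {σ : Type*} {I : Ideal (MvPolynomial σ R)} {d d' : σ →₀ ℕ}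
    (h : d' ≤ d) (hd' : monomial d' (1 : R) ∈ I) : monomial d (1 : R) ∈ I :=
  I.mem_of_dvd (monomial_dvd_monomial.2 ⟨Or.inr h, one_dvd _⟩) hd'

lemma ker_mkₐ_toLinearMap {A : Type*} [CommRing A] [Algebra R A] (I : Ideal A) :
    LinearMap.ker (Ideal.Quotient.mkₐ R I).toLinearMap = I.restrictScalars R := by
  ext
  simp [Ideal.Quotient.eq_zero_iff_mem]

end General

section Exponent

variable (m) in
noncomputable def exponent (t : Fin (2 * m)) : Fin 2 →₀ ℕ :=
  if (t : ℕ) < m then single 0 t else single 1 (t - m + 1)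

lemma exponent_injective : Function.Injective (exponent m) := by
  intro t u h
  refine Fin.ext ?_
  have h0 := DFunLike.congr_fun h 0
  have h1 := DFunLike.congr_fun h 1
  unfold exponent at h0 h1
  split_ifs at h0 h1 <;> simp only [Finsupp.single_eq_same, Finsupp.single_eq_of_ne, ne_eq,
    zero_ne_one, one_ne_zero, not_false_eq_true] at h0 h1 <;> omega

lemma toLex_exponent_lt (t : Fin (2 * m)) : toLex (exponent m t) < toLex (single 0 m) := by
  rw [Finsupp.Lex.lt_iff]
  refine ⟨0, fun j hj => absurd hj (Fin.not_lt_zero j), ?_⟩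
  have ht := t.2
  unfold exponent
  split_ifs <;> simp <;> omega

lemma single_one_mem_range_exponent (hm : 1 ≤ m) : single 1 m ∈ Set.range (exponent m) :=
  ⟨⟨2 * m - 1, by omega⟩, by rw [exponent, if_neg (by simp; omega)]; congr 1; simp only; omega⟩

lemma exponent_cases (hm : 1 ≤ m) (d : Fin 2 →₀ ℕ) :
    d ∈ Set.range (exponent m) ∨ d = single 0 m ∨ single 0 1 + single 1 1 ≤ d ∨
      single 0 (m + 1) ≤ d ∨ single 1 (m + 1) ≤ d := by
  have hd : d = single 0 (d 0) + single 1 (d 1) := by ext i; fin_cases i <;> simp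
  generalize d 0 = a, d 1 = b at hd
  subst hd
  simp only [Set.mem_range, Finsupp.le_def, Fin.forall_fin_two, Finsupp.coe_add, Pi.add_apply,
    single_apply, if_true, if_false, one_ne_zero, zero_ne_one, add_zero, zero_add,
    Order.add_one_le_iff, zero_le, and_true, true_and]
  rcases Nat.eq_zero_or_pos b with rfl | hb
  · rcases lt_trichotomy a m with ha | rfl | ha
    · exact Or.inl ⟨⟨a, by omega⟩, by simp [exponent, ha]⟩
    · simp
    · omega
  · rcases Nat.eq_zero_or_pos a with rfl | ha
    · by_cases hbm : b ≤ m
      · refine Or.inl ⟨⟨m + b - 1, by omega⟩, ?_⟩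
        rw [exponent, if_neg (by simp; omega), Finsupp.single_zero, zero_add]
        congr 1
        simp only
        omega
      · omega
    · omega

end Exponent

section CommSemiring

variable [CommSemiring R]

variable (R m) in
noncomputable def ideal : Ideal (MvPolynomial (Fin 2) R) :=
  Ideal.span {X 0 ^ m + X 1 ^ m, X 0 * X 1}

lemma X_mul_X_eq_monomial :
    (X 0 * X 1 : MvPolynomial (Fin 2) R) = monomial (single 0 1 + single 1 1) 1 := by
  rw [X, X, monomial_mul, one_mul]

lemma coeff_mul_add_mul (a b : MvPolynomial (Fin 2) R) (d : Fin 2 →₀ ℕ) :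
    coeff d (a * (X 0 ^ m + X 1 ^ m) + b * (X 0 * X 1)) =
      (if single 0 m ≤ d then coeff (d - single 0 m) a else 0)
      + (if single 1 m ≤ d then coeff (d - single 1 m) a else 0)
      + (if single 0 1 + single 1 1 ≤ d then coeff (d - (single 0 1 + single 1 1)) b else 0) := by
  simp only [mul_add, coeff_add, X_pow_eq_monomial, X_mul_X_eq_monomial, coeff_mul_monomial',
    mul_one]

lemma coeff_single_of_mem {f : MvPolynomial (Fin 2) R} (hf : f ∈ ideal R m) (i : Fin 2)
    {k : ℕ} (hk : k < m) : coeff (single i k) f = 0 := by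
  obtain ⟨a, b, rfl⟩ := Ideal.mem_span_pair.1 hf
  rw [coeff_mul_add_mul]
  fin_cases i <;> simp [Finsupp.le_def, Fin.forall_fin_two, single_apply, hk.not_ge] <;> omega

lemma coeff_single_one_eq_coeff_single_zero_of_mem {f : MvPolynomial (Fin 2) R}
    (hf : f ∈ ideal R m) : coeff (single 1 m) f = coeff (single 0 m) f := by
  obtain ⟨a, b, rfl⟩ := Ideal.mem_span_pair.1 hf
  rw [coeff_mul_add_mul, coeff_mul_add_mul]
  simp only [Finsupp.le_def, single_apply, Fin.forall_fin_two, if_true, one_ne_zero,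
    zero_ne_one, le_refl, tsub_self, Finsupp.coe_add, Pi.add_apply]
  split_ifs <;> simp_all

lemma coeff_exponent_of_mem {f : MvPolynomial (Fin 2) R} (hf : f ∈ ideal R m)
    (h : coeff (single 0 m) f = 0) (t : Fin (2 * m)) : coeff (exponent m t) f = 0 := by
  have ht := t.2
  unfold exponent
  split_ifs with htm
  · exact coeff_single_of_mem hf 0 htm
  · obtain hj | hj : (t : ℕ) - m + 1 < m ∨ (t : ℕ) - m + 1 = m := by omega
    · exact coeff_single_of_mem hf 1 hj
    · rw [hj, coeff_single_one_eq_coeff_single_zero_of_mem hf, h]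

lemma eq_zero_of_mem_of_support_subset {f : MvPolynomial (Fin 2) R} (hf : f ∈ ideal R m)
    (hs : ↑f.support ⊆ Set.range (exponent m)) : f = 0 := by
  have h0 : coeff (single 0 m) f = 0 := by
    refine notMem_support_iff.1 fun h => ?_
    obtain ⟨t, ht⟩ := hs h
    exact (toLex_exponent_lt t).ne (congrArg toLex ht)
  ext d
  rw [coeff_zero]
  by_contra hd
  obtain ⟨t, rfl⟩ := hs (mem_support_iff.2 hd)
  exact hd (coeff_exponent_of_mem hf h0 t)

theorem exists_lex_max_support_ge_of_mem (hm : 1 ≤ m) {f : MvPolynomial (Fin 2) R}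
    (hf : f ∈ ideal R m) (hf0 : f ≠ 0) :
    ∃ s ∈ f.support, (∀ t ∈ f.support, toLex t ≤ toLex s) ∧
      (single 0 m ≤ s ∨ single 0 1 + single 1 1 ≤ s ∨ single 1 (m + 1) ≤ s) := by
  obtain ⟨s, hs, hmax⟩ := f.support.exists_max_image toLex (support_nonempty.2 hf0)
  refine ⟨s, hs, hmax, ?_⟩
  rcases exponent_cases hm s with ⟨t, rfl⟩ | rfl | h | h | h
  · have h0 : coeff (single 0 m) f = 0 :=
      notMem_support_iff.1 fun h => (hmax _ h).not_gt (toLex_exponent_lt t)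
    exact absurd (coeff_exponent_of_mem hf h0 t) (mem_support_iff.1 hs)
  · exact Or.inl le_rfl
  · exact Or.inr (Or.inl h)
  · exact Or.inl ((single_le_single.2 m.le_succ).trans h)
  · exact Or.inr (Or.inr h)

end CommSemiring

section CommRing

variable [CommRing R]

lemma X_mul_X_mem : (X 0 * X 1 : MvPolynomial (Fin 2) R) ∈ ideal R m :=
  Ideal.subset_span (by simp)

lemma X_pow_add_X_pow_mem : (X 0 ^ m + X 1 ^ m : MvPolynomial (Fin 2) R) ∈ ideal R m :=
  Ideal.subset_span (by simp)

lemma X_pow_succ_mem (hm : 1 ≤ m) (i : Fin 2) :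
    (X i ^ (m + 1) : MvPolynomial (Fin 2) R) ∈ ideal R m := by
  obtain ⟨k, rfl⟩ := Nat.exists_eq_add_of_le' hm
  revert i
  rw [Fin.forall_fin_two]
  exact ⟨Ideal.mem_span_pair.2 ⟨X 0, -X 1 ^ k, by ring⟩,
    Ideal.mem_span_pair.2 ⟨X 1, -X 0 ^ k, by ring⟩⟩

theorem span_insert_X_one_pow_succ (hm : 1 ≤ m) :
    Ideal.span {X 0 ^ m + X 1 ^ m, X 0 * X 1, X 1 ^ (m + 1)} = ideal R m := by
  refine le_antisymm (Ideal.span_le.2 ?_) (Ideal.span_mono (by simp [Set.insert_subset_iff]))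
  simp only [Set.insert_subset_iff, Set.singleton_subset_iff]
  exact ⟨X_pow_add_X_pow_mem, X_mul_X_mem, X_pow_succ_mem hm 1⟩

lemma restrictSupport_exponent_sup_ideal (hm : 1 ≤ m) :
    restrictSupport R (Set.range (exponent m)) ⊔ (ideal R m).restrictScalars R = ⊤ := by
  rw [eq_top_iff, ← restrictSupport_univ, restrictSupport_eq_span, Submodule.span_le]
  rintro _ ⟨d, -, rfl⟩
  have hX (i : Fin 2) (k : ℕ) : (monomial (single i k) 1 : MvPolynomial (Fin 2) R) = X i ^ k :=
    X_pow_eq_monomial.symm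
  have hstd {d : Fin 2 →₀ ℕ} (hd : d ∈ Set.range (exponent m)) :
      (monomial d 1 : MvPolynomial (Fin 2) R) ∈ restrictSupport R (Set.range (exponent m)) :=
    (monomial_mem_restrictSupport R).2 (Or.inl hd)
  rcases exponent_cases hm d with hd | rfl | h | h | h
  · exact Submodule.mem_sup_left (hstd hd)
  · have hneg := Submodule.neg_mem _ (hstd (single_one_mem_range_exponent hm))
    refine Submodule.mem_sup.2 ⟨_, hneg, _, X_pow_add_X_pow_mem, ?_⟩
    simp only [hX]
    ring
  · exact Submodule.mem_sup_right
      (monomial_mem_of_le h (X_mul_X_eq_monomial (R := R) ▸ X_mul_X_mem))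
  · exact Submodule.mem_sup_right (monomial_mem_of_le h (hX 0 _ ▸ X_pow_succ_mem hm 0))
  · exact Submodule.mem_sup_right (monomial_mem_of_le h (hX 1 _ ▸ X_pow_succ_mem hm 1))

lemma span_range_monomial_exponent :
    Submodule.span R (Set.range fun t => (monomial (exponent m t) 1 : MvPolynomial (Fin 2) R)) =
      restrictSupport R (Set.range (exponent m)) := by
  rw [restrictSupport_eq_span, ← Set.range_comp]
  rfl

theorem linearIndependent_mk_monomial_exponent :
    LinearIndependent R fun t =>
      Ideal.Quotient.mk (ideal R m) (monomial (exponent m t) (1 : R)) := by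
  have hv : LinearIndependent R fun t => (monomial (exponent m t) 1 : MvPolynomial (Fin 2) R) :=
    (basisMonomials (Fin 2) R).linearIndependent.comp _ exponent_injective
  refine hv.map (f := (Ideal.Quotient.mkₐ R (ideal R m)).toLinearMap) ?_
  rw [span_range_monomial_exponent, ker_mkₐ_toLinearMap, Submodule.disjoint_def]
  exact fun f hs hf => eq_zero_of_mem_of_support_subset hf hs

theorem span_mk_monomial_exponent (hm : 1 ≤ m) :
    Submodule.span R (Set.range fun t =>
      Ideal.Quotient.mk (ideal R m) (monomial (exponent m t) (1 : R))) = ⊤ := by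
  let f := (Ideal.Quotient.mkₐ R (ideal R m)).toLinearMap
  have hf : LinearMap.range f = ⊤ :=
    LinearMap.range_eq_top_of_surjective f (Ideal.Quotient.mkₐ_surjective R _)
  have h := restrictSupport_exponent_sup_ideal (R := R) hm
  rw [← span_range_monomial_exponent, ← ker_mkₐ_toLinearMap, ← LinearMap.map_eq_top_iff hf,
    ← Submodule.span_image, ← Set.range_comp] at h
  exact h

end CommRing

lemma dihedralCoinvMonomial_eq_monomial (m : ℕ) (t : Fin (2 * m)) :
    dihedralCoinvMonomial m t = monomial (exponent m t) 1 := by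
  unfold dihedralCoinvMonomial exponent
  split_ifs <;> exact X_pow_eq_monomial

end DihedralCoinvariant

/-- For `m ≥ 2` and the lexicographic monomial order on `ℂ[x₁,x₂]` with `x₁ > x₂`:
the polynomials `x₁^m + x₂^m`, `x₁x₂` and `x₂^{m+1}` form a Gröbner basis of the ideal they
generate (i.e. that ideal equals `(x₁^m + x₂^m, x₁x₂)`, and the lex-leading monomial of any
nonzero member of the ideal is divisible by one of `x₁^m`, `x₁x₂`, `x₂^{m+1}`), and the
monomials `1`, `x₁^i (1 ≤ i ≤ m-1)`, `x₂^j (1 ≤ j ≤ m)` form a `ℂ`-basis of the quotient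
`ℂ[x₁,x₂]/(x₁^m + x₂^m, x₁x₂)`. -/
theorem dihedral_coinvariant_groebner_basis (m : ℕ) (hm : 2 ≤ m) :
    Ideal.span {(X 0 ^ m + X 1 ^ m : MvPolynomial (Fin 2) ℂ), X 0 * X 1, X 1 ^ (m + 1)}
      = Ideal.span {(X 0 ^ m + X 1 ^ m : MvPolynomial (Fin 2) ℂ), X 0 * X 1} ∧
    (∀ f ∈ Ideal.span {(X 0 ^ m + X 1 ^ m : MvPolynomial (Fin 2) ℂ), X 0 * X 1}, f ≠ 0 →
      ∃ s ∈ f.support, (∀ t ∈ f.support, toLex t ≤ toLex s) ∧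
        (Finsupp.single (0 : Fin 2) m ≤ s ∨
          Finsupp.single (0 : Fin 2) 1 + Finsupp.single (1 : Fin 2) 1 ≤ s ∨
          Finsupp.single (1 : Fin 2) (m + 1) ≤ s)) ∧
    LinearIndependent ℂ (fun t : Fin (2 * m) =>
      Ideal.Quotient.mk (Ideal.span {(X 0 ^ m + X 1 ^ m : MvPolynomial (Fin 2) ℂ), X 0 * X 1})
        (dihedralCoinvMonomial m t)) ∧
    Submodule.span ℂ (Set.range (fun t : Fin (2 * m) =>
      Ideal.Quotient.mk (Ideal.span {(X 0 ^ m + X 1 ^ m : MvPolynomial (Fin 2) ℂ), X 0 * X 1})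
        (dihedralCoinvMonomial m t))) = ⊤ := by
  have hm1 : 1 ≤ m := by omega
  simp only [DihedralCoinvariant.dihedralCoinvMonomial_eq_monomial]
  exact ⟨DihedralCoinvariant.span_insert_X_one_pow_succ hm1,
    fun f hf hf0 => DihedralCoinvariant.exists_lex_max_support_ge_of_mem hm1 hf hf0,
    DihedralCoinvariant.linearIndependent_mk_monomial_exponent,
    DihedralCoinvariant.span_mk_monomial_exponent hm1⟩
end
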